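/- arXiv:1504.05075 — 2 statements merged into one kernel-verified Lean document; each statement's English description precedes it below -/
import Mathlib

section
/- Suppose V ∈ B_s with s > n/2 on R^n. Then there exists a constant C such that for all x ∈ R^n and all 0 < r < R < ∞, (1/r^{n-2}) ∫_{B(x,r)} V(y) dy ≤ C (R/r)^{n/s - 2} · (1/R^{n-2}) ∫_{B(x,R)} V(y) dy. -/
open MeasureTheory Metric Set ENNReal
noncomputable section

/-- The dyadic annulus `E_k = B(x₀, 2^k r) \ B(x₀, 2^(k-1) r)`. -/
def Ann (n : ℕ) (x0 : EuclideanSpace ℝ (Fin n)) (r : ℝ) (k : ℤ) :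
    Set (EuclideanSpace ℝ (Fin n)) :=
  Metric.ball x0 ((2 : ℝ) ^ k * r) \ Metric.ball x0 ((2 : ℝ) ^ (k - 1) * r)

/-- The `L^p` norm of `f` on a set `s` (with exponent `p` a real number). -/
def lpOn (n : ℕ) (f : EuclideanSpace ℝ (Fin n) → ℝ) (p : ℝ)
    (s : Set (EuclideanSpace ℝ (Fin n))) : ℝ≥0∞ :=
  (∫⁻ x in s, (ENNReal.ofReal |f x|) ^ p) ^ (1 / p)

/-- The `L^p(ℝⁿ)` norm of `f`. -/
def lpNorm (n : ℕ) (f : EuclideanSpace ℝ (Fin n) → ℝ) (p : ℝ) : ℝ≥0∞ :=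
  lpOn n f p Set.univ

/-- The `q`-th power of the generalized Morrey norm `‖f‖_{L^{p,q,λ}_{α,θ,V}}`. -/
def morreyQ (n : ℕ) (mV : EuclideanSpace ℝ (Fin n) → ℝ) (p q lam alpha theta : ℝ)
    (f : EuclideanSpace ℝ (Fin n) → ℝ) : ℝ≥0∞ :=
  ⨆ (x0 : EuclideanSpace ℝ (Fin n)) (r : ℝ) (_ : 0 < r),
    ENNReal.ofReal ((1 + r * mV x0) ^ alpha * r ^ (-(lam * n))) *
      ∑' k : ℕ, (volume (Ann n x0 r (-(k : ℤ)))) ^ (theta * q) *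
        (lpOn n f p (Ann n x0 r (-(k : ℤ)))) ^ q

/-- The generalized Morrey norm. -/
def morreyNorm (n : ℕ) (mV : EuclideanSpace ℝ (Fin n) → ℝ) (p q lam alpha theta : ℝ)
    (f : EuclideanSpace ℝ (Fin n) → ℝ) : ℝ≥0∞ :=
  (morreyQ n mV p q lam alpha theta f) ^ (1 / q)

/-- `V` belongs to the reverse Hölder class `B_s`. -/
def ReverseHolder (n : ℕ) (V : EuclideanSpace ℝ (Fin n) → ℝ) (s : ℝ) : Prop :=
  ∃ C > (0 : ℝ), ∀ (x : EuclideanSpace ℝ (Fin n)) (r : ℝ), 0 < r →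
    ((volume (Metric.ball x r))⁻¹ *
        ∫⁻ y in Metric.ball x r, (ENNReal.ofReal (V y)) ^ s) ^ (1 / s) ≤
      ENNReal.ofReal C *
        ((volume (Metric.ball x r))⁻¹ * ∫⁻ y in Metric.ball x r, ENNReal.ofReal (V y))

/-- The auxiliary function `m_V` of Shen. -/
def auxm (n : ℕ) (V : EuclideanSpace ℝ (Fin n) → ℝ) (x : EuclideanSpace ℝ (Fin n)) : ℝ :=
  (sSup {r : ℝ | 0 < r ∧
      ∫⁻ y in Metric.ball x r, ENNReal.ofReal (V y) ≤ ENNReal.ofReal (r ^ ((n : ℝ) - 2))})⁻¹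

/-- The BMO seminorm of `b`. -/
def bmoNorm (n : ℕ) (b : EuclideanSpace ℝ (Fin n) → ℝ) : ℝ≥0∞ :=
  ⨆ (x : EuclideanSpace ℝ (Fin n)) (r : ℝ) (_ : 0 < r),
    (volume (Metric.ball x r))⁻¹ *
      ∫⁻ y in Metric.ball x r, ENNReal.ofReal |b y - ⨍ z in Metric.ball x r, b z|

/-- The fractional Hardy–Littlewood maximal function `M_{σ,γ}`. -/
def fracMax (n : ℕ) (sigma gam : ℝ) (f : EuclideanSpace ℝ (Fin n) → ℝ)
    (x : EuclideanSpace ℝ (Fin n)) : ℝ≥0∞ :=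
  ⨆ (z : EuclideanSpace ℝ (Fin n)) (ρ : ℝ) (_ : 0 < ρ) (_ : x ∈ Metric.ball z ρ),
    ((volume (Metric.ball z ρ)) ^ (-(1 - sigma * gam / n)) *
      ∫⁻ y in Metric.ball z ρ, (ENNReal.ofReal |f y|) ^ gam) ^ (1 / gam)

/-!
Hölder's inequality on `B(x, r) ⊆ B(x, R)` gives
`∫_{B(x,r)} V ≤ (∫_{B(x,R)} V^s)^{1/s} |B(x,r)|^{1 - 1/s}`, and the reverse Hölder inequality on
`B(x, R)` bounds the first factor by `C |B(x,R)|^{1/s - 1} ∫_{B(x,R)} V`. Hence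
`∫_{B(x,r)} V ≤ C (r/R)^{n(1 - 1/s)} ∫_{B(x,R)} V`, and multiplying by `r^{2-n}` gives the claim.
-/

theorem lintegral_le_lintegral_rpow_mul_measure_univ {α : Type*} [MeasurableSpace α]
    (μ : Measure α) (f : α → ℝ≥0∞) {s : ℝ} (hs : 1 ≤ s) :
    ∫⁻ x, f x ∂μ ≤ (∫⁻ x, f x ^ s ∂μ) ^ (1 / s) * μ univ ^ (1 - 1 / s) := by
  rcases hs.eq_or_lt with rfl | hs
  · simp
  have hpq : s.HolderConjugate s.conjExponent := .conjExponent hs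
  have hq : 1 / s.conjExponent = 1 - 1 / s := by
    rw [eq_sub_iff_add_eq']
    simpa using hpq.one_div_add_one_div
  -- `f` need not be measurable, so Hölder is applied to the simple functions below `f`.
  rw [lintegral_def]
  refine iSup₂_le fun g hg => ?_
  rw [← SimpleFunc.lintegral_eq_lintegral]
  calc ∫⁻ x, g x ∂μ = ∫⁻ x, ((g : α → ℝ≥0∞) * fun _ : α => (1 : ℝ≥0∞)) x ∂μ := by simp
    _ ≤ (∫⁻ x, g x ^ s ∂μ) ^ (1 / s) * (∫⁻ _, 1 ^ s.conjExponent ∂μ) ^ (1 / s.conjExponent) :=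
      ENNReal.lintegral_mul_le_Lp_mul_Lq μ hpq g.measurable.aemeasurable aemeasurable_const
    _ ≤ (∫⁻ x, f x ^ s ∂μ) ^ (1 / s) * μ univ ^ (1 - 1 / s) := by
      simp only [ENNReal.one_rpow, lintegral_const, one_mul, hq]
      gcongr with x
      exact hg x

theorem lintegral_le_mul_rpow_measure_div_of_reverseHolder {α : Type*} [MeasurableSpace α]
    {μ : Measure α} {f : α → ℝ≥0∞} {s : ℝ} (hs : 1 ≤ s) {A B : Set α} (hAB : A ⊆ B)
    (hB₀ : μ B ≠ 0) (hB : μ B ≠ ∞) {C : ℝ≥0∞}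
    (hRH : ((μ B)⁻¹ * ∫⁻ x in B, f x ^ s ∂μ) ^ (1 / s) ≤ C * ((μ B)⁻¹ * ∫⁻ x in B, f x ∂μ)) :
    ∫⁻ x in A, f x ∂μ ≤ C * (μ A / μ B) ^ (1 - 1 / s) * ∫⁻ x in B, f x ∂μ := by
  have hs₀ : 0 ≤ 1 / s := by positivity
  have hs₁ : 0 ≤ 1 - 1 / s := sub_nonneg.2 ((div_le_one (by linarith)).2 hs)
  have hB_rpow : μ B ^ (1 / s) * (μ B)⁻¹ = (μ B)⁻¹ ^ (1 - 1 / s) := by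
    rw [ENNReal.inv_rpow, ← ENNReal.rpow_neg_one, ← ENNReal.rpow_add _ _ hB₀ hB,
      ← ENNReal.rpow_neg]
    ring_nf
  calc ∫⁻ x in A, f x ∂μ
      ≤ (∫⁻ x in A, f x ^ s ∂μ) ^ (1 / s) * μ A ^ (1 - 1 / s) := by
        simpa using lintegral_le_lintegral_rpow_mul_measure_univ (μ.restrict A) f hs
    _ ≤ (∫⁻ x in B, f x ^ s ∂μ) ^ (1 / s) * μ A ^ (1 - 1 / s) := by gcongr
    _ = μ B ^ (1 / s) * ((μ B)⁻¹ * ∫⁻ x in B, f x ^ s ∂μ) ^ (1 / s) * μ A ^ (1 - 1 / s) := by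
        rw [ENNReal.mul_rpow_of_nonneg _ _ hs₀, ← mul_assoc, ← ENNReal.mul_rpow_of_nonneg _ _ hs₀,
          ENNReal.mul_inv_cancel hB₀ hB, ENNReal.one_rpow, one_mul]
    _ ≤ μ B ^ (1 / s) * (C * ((μ B)⁻¹ * ∫⁻ x in B, f x ∂μ)) * μ A ^ (1 - 1 / s) := by
        gcongr
    _ = C * (μ A ^ (1 - 1 / s) * (μ B ^ (1 / s) * (μ B)⁻¹)) * ∫⁻ x in B, f x ∂μ := by ring
    _ = C * (μ A / μ B) ^ (1 - 1 / s) * ∫⁻ x in B, f x ∂μ := by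
        rw [hB_rpow, ← ENNReal.mul_rpow_of_nonneg _ _ hs₁, ← div_eq_mul_inv]

theorem addHaar_ball_div_addHaar_ball {E : Type*} [NormedAddCommGroup E] [NormedSpace ℝ E]
    [MeasurableSpace E] [BorelSpace E] [FiniteDimensional ℝ E] (μ : Measure E)
    [μ.IsAddHaarMeasure] (x : E) {r R : ℝ} (hr : 0 < r) (hR : 0 < R) :
    μ (ball x r) / μ (ball x R) = ENNReal.ofReal ((r / R) ^ Module.finrank ℝ E) := by
  rw [Measure.addHaar_ball_of_pos μ x hr, Measure.addHaar_ball_of_pos μ x hR,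
    ENNReal.mul_div_mul_right _ _ (measure_ball_pos μ 0 one_pos).ne' measure_ball_lt_top.ne,
    ← ENNReal.ofReal_div_of_pos (by positivity), div_pow]

theorem rpow_two_sub_mul_div_pow_rpow {r R : ℝ} (hr : 0 < r) (hR : 0 < R) (n : ℕ) (s : ℝ) :
    r ^ (2 - (n : ℝ)) * ((r / R) ^ n) ^ (1 - 1 / s) =
      (R / r) ^ ((n : ℝ) / s - 2) * R ^ (2 - (n : ℝ)) := by
  simp only [Real.rpow_def_of_pos hr, Real.rpow_def_of_pos hR,
    Real.rpow_def_of_pos (div_pos hR hr), Real.rpow_def_of_pos (pow_pos (div_pos hr hR) n),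
    ← Real.exp_add, Real.exp_eq_exp, Real.log_div hr.ne' hR.ne', Real.log_div hR.ne' hr.ne',
    Real.log_pow]
  ring

theorem reverseHolder_scale_compare_general (n : ℕ) (hn : 3 ≤ n)
    (V : EuclideanSpace ℝ (Fin n) → ℝ)
    (s : ℝ) (hs : (n : ℝ) / 2 < s)
    (hRH : ReverseHolder n V s) :
    ∃ C > (0 : ℝ), ∀ (x : EuclideanSpace ℝ (Fin n)) (r R : ℝ), 0 < r → r < R →
      ENNReal.ofReal (r ^ (2 - (n : ℝ))) * ∫⁻ y in Metric.ball x r, ENNReal.ofReal (V y) ≤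
        ENNReal.ofReal (C * (R / r) ^ ((n : ℝ) / s - 2) * R ^ (2 - (n : ℝ))) *
          ∫⁻ y in Metric.ball x R, ENNReal.ofReal (V y) := by
  obtain ⟨C, hC, hRH⟩ := hRH
  have hs₁ : 1 ≤ s := by
    have : (3 : ℝ) ≤ n := by exact_mod_cast hn
    linarith
  refine ⟨C, hC, fun x r R hr hrR => ?_⟩
  have hR : 0 < R := hr.trans hrR
  have hcompare := lintegral_le_mul_rpow_measure_div_of_reverseHolder hs₁
    (ball_subset_ball hrR.le) (measure_ball_pos volume x hR).ne' measure_ball_lt_top.ne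
    (hRH x R hR)
  rw [addHaar_ball_div_addHaar_ball volume x hr hR, finrank_euclideanSpace_fin,
    ENNReal.ofReal_rpow_of_nonneg (by positivity)
      (sub_nonneg.2 ((div_le_one (by linarith)).2 hs₁)),
    ← ENNReal.ofReal_mul hC.le] at hcompare
  calc ENNReal.ofReal (r ^ (2 - (n : ℝ))) * ∫⁻ y in ball x r, ENNReal.ofReal (V y)
      ≤ ENNReal.ofReal (r ^ (2 - (n : ℝ))) *
          (ENNReal.ofReal (C * ((r / R) ^ n) ^ (1 - 1 / s)) *
            ∫⁻ y in ball x R, ENNReal.ofReal (V y)) := by gcongr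
    _ = ENNReal.ofReal (C * (r ^ (2 - (n : ℝ)) * ((r / R) ^ n) ^ (1 - 1 / s))) *
          ∫⁻ y in ball x R, ENNReal.ofReal (V y) := by
        rw [← mul_assoc, ← ENNReal.ofReal_mul (by positivity), mul_left_comm]
    _ = _ := by rw [rpow_two_sub_mul_div_pow_rpow hr hR, mul_assoc]

/-- Shen's Lemma 1.2 comparing averages of `V` at two scales. -/
theorem reverseHolder_scale_compare (n : ℕ) (hn : 3 ≤ n)
    (V : EuclideanSpace ℝ (Fin n) → ℝ) (hV : ∀ x, 0 ≤ V x)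
    (s : ℝ) (hs : (n : ℝ) / 2 < s)
    (hRH : ReverseHolder n V s) :
    ∃ C > (0 : ℝ), ∀ (x : EuclideanSpace ℝ (Fin n)) (r R : ℝ), 0 < r → r < R →
      ENNReal.ofReal (r ^ (2 - (n : ℝ))) * ∫⁻ y in Metric.ball x r, ENNReal.ofReal (V y) ≤
        ENNReal.ofReal (C * (R / r) ^ ((n : ℝ) / s - 2) * R ^ (2 - (n : ℝ))) *
          ∫⁻ y in Metric.ball x R, ENNReal.ofReal (V y) :=
  reverseHolder_scale_compare_general n hn V s hs hRH
end
end

section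
/- Let 0 ≤ t < ∞, and suppose K_t(x,y) satisfies the Gaussian bound with decay: 0 ≤ K_t(x,y) ≤ C_k t^{−n/2} exp(−|x−y|^2/(5t)) (1 + √t m_V(x) + √t m_V(y))^{−k} for every nonnegative integer k. Then for 0 < β < n/2 and every N ∈ N there is a constant C_N such that the kernel K_β(x,y) = ∫_0^∞ K_t(x,y) t^{β−1} dt satisfies K_β(x,y) ≤ C_N (1 + |x−y| m_V(x))^{−N} |x−y|^{−(n−2β)}. -/
open MeasureTheory Metric Set ENNReal
noncomputable section

/-- Substituting `t ↦ t⁻¹` in the Gamma integral: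
`∫₀^∞ t^(-a-1) exp(-c/t) dt = (1/c)^a Γ(a)`. -/
lemma aux_gamma_inv_integral {a c : ℝ} (ha : 0 < a) (hc : 0 < c) :
    ∫⁻ t in Set.Ioi (0 : ℝ), ENNReal.ofReal (t ^ (-a - 1) * Real.exp (-(c / t))) =
      ENNReal.ofReal ((1 / c) ^ a * Real.Gamma a) := by
  have hderiv : ∀ x ∈ Set.Ioi (0 : ℝ),
      HasDerivWithinAt (fun y : ℝ => y⁻¹) (-(x ^ 2)⁻¹) (Set.Ioi 0) x :=
    fun x hx => (hasDerivAt_inv (ne_of_gt hx)).hasDerivWithinAt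
  have hinj : Set.InjOn (fun y : ℝ => y⁻¹) (Set.Ioi 0) := fun x _ y _ h => inv_injective h
  have himg : (fun y : ℝ => y⁻¹) '' Set.Ioi 0 = Set.Ioi 0 := by
    ext y
    constructor
    · rintro ⟨x, hx, rfl⟩
      exact Set.mem_Ioi.mpr (inv_pos.mpr (Set.mem_Ioi.mp hx))
    · intro hy
      exact ⟨y⁻¹, Set.mem_Ioi.mpr (inv_pos.mpr (Set.mem_Ioi.mp hy)), inv_inv y⟩
  have hint0 : MeasureTheory.IntegrableOn
      (fun y : ℝ => y ^ (a - 1) * Real.exp (-(c * y))) (Set.Ioi 0) := by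
    have := integrableOn_rpow_mul_exp_neg_mul_rpow (p := 1)
      (show (-1 : ℝ) < a - 1 by linarith) one_pos hc
    simpa [Real.rpow_one, neg_mul] using this
  have hcongr : ∀ x ∈ Set.Ioi (0 : ℝ),
      |(-(x ^ 2)⁻¹)| • ((x⁻¹) ^ (a - 1) * Real.exp (-(c * x⁻¹))) =
        x ^ (-a - 1) * Real.exp (-(c / x)) := by
    intro x hx
    have hx0 : (0 : ℝ) < x := hx
    have h1 : |(-(x ^ 2)⁻¹)| = x ^ ((-2 : ℝ)) := by
      rw [abs_neg, abs_inv, abs_of_nonneg (by positivity : (0:ℝ) ≤ x ^ 2)]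
      rw [show ((-2 : ℝ)) = -((2:ℕ):ℝ) by norm_num, Real.rpow_neg hx0.le,
        Real.rpow_natCast]
    have h2 : (x⁻¹) ^ (a - 1) = x ^ (-(a - 1)) := by
      rw [Real.inv_rpow hx0.le, ← Real.rpow_neg hx0.le]
    rw [smul_eq_mul, h1, h2, ← mul_assoc, ← Real.rpow_add hx0]
    rw [show (-2 : ℝ) + -(a - 1) = -a - 1 by ring, div_eq_mul_inv c x]
  have hchange := integral_image_eq_integral_abs_deriv_smul measurableSet_Ioi hderiv hinj
      (fun y : ℝ => y ^ (a - 1) * Real.exp (-(c * y)))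
  rw [himg] at hchange
  have hval : ∫ y in Set.Ioi (0 : ℝ), y ^ (a - 1) * Real.exp (-(c * y)) =
      (1 / c) ^ a * Real.Gamma a := Real.integral_rpow_mul_exp_neg_mul_Ioi ha hc
  have hint1 : MeasureTheory.IntegrableOn
      (fun x : ℝ => x ^ (-a - 1) * Real.exp (-(c / x))) (Set.Ioi 0) := by
    have h := (integrableOn_image_iff_integrableOn_abs_deriv_smul measurableSet_Ioi hderiv hinj
      (fun y : ℝ => y ^ (a - 1) * Real.exp (-(c * y)))).mp (by rwa [himg])
    exact h.congr_fun hcongr measurableSet_Ioi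
  have hnn : 0 ≤ᵐ[volume.restrict (Set.Ioi (0 : ℝ))]
      fun x : ℝ => x ^ (-a - 1) * Real.exp (-(c / x)) := by
    filter_upwards [MeasureTheory.ae_restrict_mem measurableSet_Ioi] with x hx
    have hx0 : (0 : ℝ) < x := hx
    positivity
  rw [← MeasureTheory.ofReal_integral_eq_lintegral_ofReal hint1 hnn]
  congr 1
  rw [← hval, hchange]
  exact MeasureTheory.setIntegral_congr_fun measurableSet_Ioi fun x hx => (hcongr x hx).symm

/-- integrating the Gaussian heat-kernel bounds in `t` yields the decay
estimate for the kernel `K_β(x,y) = ∫₀^∞ K_t(x,y) t^{β−1} dt` of `(−Δ+V)^{−β}`. -/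
theorem fractional_kernel_bound (n : ℕ) (hn : 3 ≤ n)
    (mV : EuclideanSpace ℝ (Fin n) → ℝ) (hm : ∀ x, 0 < mV x)
    (Kt : ℝ → EuclideanSpace ℝ (Fin n) → EuclideanSpace ℝ (Fin n) → ℝ)
    (hKtpos : ∀ t x y, 0 ≤ Kt t x y)
    (hKt : ∀ k : ℕ, ∃ Ck > (0 : ℝ), ∀ (t : ℝ) (x y : EuclideanSpace ℝ (Fin n)), 0 < t →
      Kt t x y ≤ Ck * t ^ (-(n : ℝ) / 2) * Real.exp (-(dist x y) ^ 2 / (5 * t)) *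
        (1 + Real.sqrt t * mV x + Real.sqrt t * mV y) ^ (-(k : ℝ))) :
    ∀ beta : ℝ, 0 < beta → beta < (n : ℝ) / 2 →
      ∀ N : ℕ, ∃ CN > (0 : ℝ), ∀ x y : EuclideanSpace ℝ (Fin n), x ≠ y →
        ∫⁻ t in Set.Ioi (0 : ℝ), ENNReal.ofReal (Kt t x y * t ^ (beta - 1)) ≤
          ENNReal.ofReal (CN * (1 + dist x y * mV x) ^ (-(N : ℝ)) *
            dist x y ^ (-((n : ℝ) - 2 * beta))) := by
  intro beta hb1 hb2 N
  obtain ⟨Ck, hCk, hbound⟩ := hKt N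
  set a : ℝ := (n : ℝ) / 2 - beta with ha_def
  have ha : 0 < a := by simp only [ha_def]; linarith
  set C1 : ℝ := 2 ^ N * (N.factorial : ℝ) * 10 ^ N with hC1_def
  have hfac1 : (1 : ℝ) ≤ (N.factorial : ℝ) := by exact_mod_cast N.factorial_pos
  have hC1 : 0 < C1 := by positivity
  refine ⟨Ck * C1 * 10 ^ a * Real.Gamma a,
    by positivity, ?_⟩
  intro x y hxy
  set d : ℝ := dist x y with hd_def
  have hd : 0 < d := dist_pos.mpr hxy
  set m : ℝ := mV x with hm_def
  have hm0 : 0 < m := hm x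
  set c : ℝ := d ^ 2 / 10 with hc_def
  have hc : 0 < c := by positivity
  set A : ℝ := Ck * C1 * (1 + d * m) ^ (-(N : ℝ)) with hA_def
  have hA : 0 ≤ A := by positivity
  have hpt : ∀ t ∈ Set.Ioi (0 : ℝ),
      ENNReal.ofReal (Kt t x y * t ^ (beta - 1)) ≤
        ENNReal.ofReal (A * (t ^ (-a - 1) * Real.exp (-(c / t)))) := by
    intro t ht
    have ht0 : (0 : ℝ) < t := ht
    apply ENNReal.ofReal_le_ofReal
    set s : ℝ := Real.sqrt t with hs_def
    have hs : 0 < s := Real.sqrt_pos.mpr ht0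
    set u : ℝ := d / s with hu_def
    have hu : 0 < u := div_pos hd hs
    have hmy : 0 < mV y := hm y
    -- step 2: drop the `mV y` term
    have h2 : (1 + s * m + s * mV y) ^ (-(N : ℝ)) ≤ (1 + s * m) ^ (-(N : ℝ)) :=
      Real.rpow_le_rpow_of_nonpos (by positivity) (by nlinarith)
        (neg_nonpos.mpr (Nat.cast_nonneg N))
    -- step 3: trade `s` for `d`
    have h3 : (1 + s * m) ^ (-(N : ℝ)) ≤ (1 + u) ^ N * (1 + d * m) ^ (-(N : ℝ)) := by
      have hQP : (1 + d * m) ^ N ≤ (1 + u) ^ N * (1 + s * m) ^ N := by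
        rw [← mul_pow]
        apply pow_le_pow_left₀ (by positivity)
        have hds : u * (s * m) = d * m := by
          rw [hu_def]; field_simp
        nlinarith
      have e1 : (1 + s * m) ^ (-(N : ℝ)) = ((1 + s * m) ^ N)⁻¹ := by
        rw [Real.rpow_neg (by positivity), Real.rpow_natCast]
      have e2 : (1 + d * m) ^ (-(N : ℝ)) = ((1 + d * m) ^ N)⁻¹ := by
        rw [Real.rpow_neg (by positivity), Real.rpow_natCast]
      rw [e1, e2, inv_eq_one_div, inv_eq_one_div, mul_one_div,
        div_le_div_iff₀ (by positivity) (by positivity), one_mul]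
      exact hQP
    -- step 4: absorb `(1+u)^N` into the exponential
    have h4 : (1 + u) ^ N ≤ C1 * Real.exp (u ^ 2 / 10) := by
      have hexp1 : (1 : ℝ) ≤ Real.exp (u ^ 2 / 10) := Real.one_le_exp (by positivity)
      rcases le_total u 1 with h | h
      · have h2N : (1 + u) ^ N ≤ 2 ^ N := pow_le_pow_left₀ (by positivity) (by linarith) N
        have h10 : (1 : ℝ) ≤ 10 ^ N := one_le_pow₀ (by norm_num)
        have hC : (2 : ℝ) ^ N ≤ C1 := by
          rw [hC1_def]
          calc (2:ℝ) ^ N = 2 ^ N * 1 * 1 := by ring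
            _ ≤ 2 ^ N * (N.factorial : ℝ) * 10 ^ N := by gcongr <;> positivity
        calc (1 + u) ^ N ≤ 2 ^ N := h2N
          _ ≤ C1 := hC
          _ ≤ C1 * Real.exp (u ^ 2 / 10) := le_mul_of_one_le_right hC1.le hexp1
      · have key : (u ^ 2 / 10) ^ N / (N.factorial : ℝ) ≤ Real.exp (u ^ 2 / 10) :=
          Real.pow_div_factorial_le_exp _ (by positivity) N
        have hN2 : (u ^ 2) ^ N ≤ (N.factorial : ℝ) * 10 ^ N * Real.exp (u ^ 2 / 10) := by
          rw [div_pow, div_div] at key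
          have h10 : (0 : ℝ) < 10 ^ N * (N.factorial : ℝ) := by positivity
          calc (u ^ 2) ^ N = (u ^ 2) ^ N / (10 ^ N * (N.factorial : ℝ)) *
                (10 ^ N * (N.factorial : ℝ)) := by field_simp
            _ ≤ Real.exp (u ^ 2 / 10) * (10 ^ N * (N.factorial : ℝ)) := by
                apply mul_le_mul_of_nonneg_right key h10.le
            _ = (N.factorial : ℝ) * 10 ^ N * Real.exp (u ^ 2 / 10) := by ring
        have h1u : (1 + u) ^ N ≤ (2 * u) ^ N :=
          pow_le_pow_left₀ (by positivity) (by linarith) N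
        have huN : u ^ N ≤ u ^ (2 * N) := pow_le_pow_right₀ h (by omega)
        calc (1 + u) ^ N ≤ (2 * u) ^ N := h1u
          _ = 2 ^ N * u ^ N := mul_pow 2 u N
          _ ≤ 2 ^ N * u ^ (2 * N) := by
              apply mul_le_mul_of_nonneg_left huN (by positivity)
          _ = 2 ^ N * (u ^ 2) ^ N := by rw [← pow_mul]
          _ ≤ 2 ^ N * ((N.factorial : ℝ) * 10 ^ N * Real.exp (u ^ 2 / 10)) := by
              apply mul_le_mul_of_nonneg_left hN2 (by positivity)
          _ = C1 * Real.exp (u ^ 2 / 10) := by rw [hC1_def]; ring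
    -- step 5: combine exponentials
    have h5 : Real.exp (u ^ 2 / 10) * Real.exp (-d ^ 2 / (5 * t)) =
        Real.exp (-(c / t)) := by
      rw [← Real.exp_add]
      congr 1
      have hsq : s ^ 2 = t := Real.sq_sqrt ht0.le
      rw [hu_def, div_pow, hsq, hc_def]
      field_simp
      ring
    -- step 6: combine powers of t
    have h6 : t ^ (-(n : ℝ) / 2) * t ^ (beta - 1) = t ^ (-a - 1) := by
      rw [← Real.rpow_add ht0]
      congr 1
      rw [ha_def]; ring
    have hKb := hbound t x y ht0
    have hT2 : (0 : ℝ) ≤ t ^ (beta - 1) := Real.rpow_nonneg ht0.le _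
    have hT1 : (0 : ℝ) ≤ t ^ (-(n : ℝ) / 2) := Real.rpow_nonneg ht0.le _
    have hE1 : (0 : ℝ) ≤ Real.exp (-d ^ 2 / (5 * t)) := (Real.exp_pos _).le
    calc Kt t x y * t ^ (beta - 1)
        ≤ (Ck * t ^ (-(n : ℝ) / 2) * Real.exp (-d ^ 2 / (5 * t)) *
            (1 + s * m + s * mV y) ^ (-(N : ℝ))) * t ^ (beta - 1) := by
          apply mul_le_mul_of_nonneg_right _ hT2
          exact hKb
      _ ≤ (Ck * t ^ (-(n : ℝ) / 2) * Real.exp (-d ^ 2 / (5 * t)) *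
            ((1 + u) ^ N * (1 + d * m) ^ (-(N : ℝ)))) * t ^ (beta - 1) := by
          apply mul_le_mul_of_nonneg_right _ hT2
          apply mul_le_mul_of_nonneg_left (h2.trans h3) (by positivity)
      _ ≤ (Ck * t ^ (-(n : ℝ) / 2) * Real.exp (-d ^ 2 / (5 * t)) *
            ((C1 * Real.exp (u ^ 2 / 10)) * (1 + d * m) ^ (-(N : ℝ)))) * t ^ (beta - 1) := by
          apply mul_le_mul_of_nonneg_right _ hT2
          apply mul_le_mul_of_nonneg_left _ (by positivity)
          apply mul_le_mul_of_nonneg_right h4 (by positivity)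
      _ = A * ((t ^ (-(n : ℝ) / 2) * t ^ (beta - 1)) *
            (Real.exp (u ^ 2 / 10) * Real.exp (-d ^ 2 / (5 * t)))) := by
          rw [hA_def]; ring
      _ = A * (t ^ (-a - 1) * Real.exp (-(c / t))) := by rw [h5, h6]
  have hfinal : A * ((1 / c) ^ a * Real.Gamma a) =
      Ck * C1 * 10 ^ a * Real.Gamma a * (1 + d * m) ^ (-(N : ℝ)) *
        d ^ (-((n : ℝ) - 2 * beta)) := by
    have e1 : ((1 : ℝ) / c) ^ a = 10 ^ a * d ^ (-(2 * a)) := by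
      rw [hc_def, one_div_div, Real.div_rpow (by norm_num) (by positivity),
        ← Real.rpow_natCast d 2, ← Real.rpow_mul hd.le, Real.rpow_neg hd.le,
        div_eq_mul_inv]
      norm_num
    have e2 : -((n : ℝ) - 2 * beta) = -(2 * a) := by rw [ha_def]; ring
    rw [e1, e2, hA_def]
    ring
  calc ∫⁻ t in Set.Ioi (0 : ℝ), ENNReal.ofReal (Kt t x y * t ^ (beta - 1))
      ≤ ∫⁻ t in Set.Ioi (0 : ℝ),
          ENNReal.ofReal (A * (t ^ (-a - 1) * Real.exp (-(c / t)))) :=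
        MeasureTheory.setLIntegral_mono' measurableSet_Ioi hpt
    _ = ENNReal.ofReal A *
          ∫⁻ t in Set.Ioi (0 : ℝ), ENNReal.ofReal (t ^ (-a - 1) * Real.exp (-(c / t))) := by
        simp_rw [ENNReal.ofReal_mul hA]
        exact MeasureTheory.lintegral_const_mul' _ _ ENNReal.ofReal_ne_top
    _ = ENNReal.ofReal A * ENNReal.ofReal ((1 / c) ^ a * Real.Gamma a) := by
        rw [aux_gamma_inv_integral ha hc]
    _ = ENNReal.ofReal (A * ((1 / c) ^ a * Real.Gamma a)) := (ENNReal.ofReal_mul hA).symm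
    _ ≤ ENNReal.ofReal (Ck * C1 * 10 ^ a * Real.Gamma a * (1 + d * m) ^ (-(N : ℝ)) *
          d ^ (-((n : ℝ) - 2 * beta))) := le_of_eq (by rw [hfinal])
end
end
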